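/- arXiv:2009.07956 — 6 statements merged into one kernel-verified Lean document; each statement's English description precedes it below -/
import Mathlib

section
/- Let (X,d) be a metric space, p, q ∈ X, and z ∈ X. Suppose there exist constants C ≥ 0, α > 0 and r₀ > 0 such that e_{p,q}(x) ≤ C·d(x,z)^{1+α} for every x ∈ X with d(x,z) < r₀. Then for every locally Lipschitz function f : X → ℝ, lip(f + d(p,·))(z) = lip(f − d(q,·))(z). -/
/-!
The excess bound at `x = z` forces `e_{p,q}(z) = 0`, so the increments of `d(p,·)` and of
`-d(q,·)` at `z` differ by exactly `e_{p,q}(y) = O(d(y,z)^{1+α}) = o(d(y,z))`; adding `f` to both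
does not change this. The local slope at `z` cannot see a perturbation of the increments of size
`o(d(y,z))`.
-/

open Filter Set
open scoped ENNReal Topology

/-- The local Lipschitz constant (local slope) of `f` at `x`:
`lip f (x) = limsup_{y → x, y ≠ x} |f y - f x| / d(y,x)`, which equals `0` at
isolated points (where the punctured neighbourhood filter is trivial). -/
noncomputable def lipConst {X : Type*} [MetricSpace X] (f : X → ℝ) (x : X) : ℝ≥0∞ :=
  Filter.limsup (fun y => ENNReal.ofReal (|f y - f x| / dist y x)) (𝓝[≠] x)

open Asymptotics

section
variable {X : Type*} [MetricSpace X]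

theorem lipConst_le_of_isLittleO {g₁ g₂ : X → ℝ} {z : X}
    (h : (fun y => (g₁ y - g₁ z) - (g₂ y - g₂ z)) =o[𝓝[≠] z] fun y => dist y z) :
    lipConst g₁ z ≤ lipConst g₂ z := by
  rcases eq_or_neBot (𝓝[≠] z) with hbot | hne
  · simp [lipConst, hbot]
  refine ENNReal.le_of_forall_pos_le_add fun ε hε _ => ?_
  have hslope : ∀ᶠ y in 𝓝[≠] z, ENNReal.ofReal (|g₁ y - g₁ z| / dist y z)
      ≤ ENNReal.ofReal (|g₂ y - g₂ z| / dist y z) + ε := by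
    filter_upwards [(h.def (NNReal.coe_pos.2 hε)), self_mem_nhdsWithin] with y hy (hyz : y ≠ z)
    have hd : 0 < dist y z := dist_pos.2 hyz
    rw [Real.norm_eq_abs, Real.norm_of_nonneg hd.le] at hy
    have hdiff : |g₁ y - g₁ z| ≤ |g₂ y - g₂ z| + ε * dist y z := by
      linarith [abs_sub_abs_le_abs_sub (g₁ y - g₁ z) (g₂ y - g₂ z)]
    calc ENNReal.ofReal (|g₁ y - g₁ z| / dist y z)
        ≤ ENNReal.ofReal (|g₂ y - g₂ z| / dist y z + ε) := by
          refine ENNReal.ofReal_le_ofReal ?_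
          rwa [div_add' _ _ _ hd.ne', div_le_div_iff_of_pos_right hd]
      _ ≤ ENNReal.ofReal (|g₂ y - g₂ z| / dist y z) + ε := by
          simpa using ENNReal.ofReal_add_le (q := (ε : ℝ))
  calc lipConst g₁ z
      ≤ limsup (fun y => ENNReal.ofReal (|g₂ y - g₂ z| / dist y z) + ε) (𝓝[≠] z) :=
        limsup_le_limsup hslope
    _ = lipConst g₂ z + ε := limsup_add_const _ _ _ (by isBoundedDefault) (by isBoundedDefault)

theorem lipConst_eq_of_isLittleO {g₁ g₂ : X → ℝ} {z : X}
    (h : (fun y => (g₁ y - g₁ z) - (g₂ y - g₂ z)) =o[𝓝[≠] z] fun y => dist y z) :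
    lipConst g₁ z = lipConst g₂ z := by
  refine le_antisymm (lipConst_le_of_isLittleO h) (lipConst_le_of_isLittleO ?_)
  simpa only [Pi.neg_apply, neg_sub] using h.neg_left

theorem isLittleO_dist_rpow_one_add {α : ℝ} (hα : 0 < α) (z : X) :
    (fun y => dist y z ^ (1 + α)) =o[𝓝 z] fun y => dist y z := by
  have hpow : Tendsto (fun y => dist y z ^ α) (𝓝 z) (𝓝 0) := by
    simpa [Function.comp_def, Real.zero_rpow hα.ne'] using
      ((Real.continuous_rpow_const hα.le).tendsto 0).comp
        (tendsto_iff_dist_tendsto_zero.1 (tendsto_id (x := 𝓝 z)))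
  refine ((isBigO_refl (fun y => dist y z) _).mul_isLittleO
    ((isLittleO_one_iff ℝ).2 hpow)).congr (fun y => ?_) (fun y => mul_one _)
  exact (Real.rpow_one_add' dist_nonneg (by linarith)).symm

def excess (p q x : X) : ℝ := dist p x + dist x q - dist p q

theorem excess_nonneg (p q x : X) : 0 ≤ excess p q x :=
  sub_nonneg.2 (dist_triangle p x q)

end

theorem lip_add_dist_eq_lip_sub_dist_general {X : Type*} [MetricSpace X] (p q z : X)
    (C α r₀ : ℝ) (hα : 0 < α) (hr₀ : 0 < r₀)
    (hexcess : ∀ x : X, dist x z < r₀ →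
      dist p x + dist x q - dist p q ≤ C * dist x z ^ (1 + α))
    (f : X → ℝ) :
    lipConst (fun y => f y + dist p y) z = lipConst (fun y => f y - dist q y) z := by
  have hz : excess p q z = 0 :=
    le_antisymm
      (by simpa [excess, Real.zero_rpow (by linarith : 1 + α ≠ 0)] using hexcess z (by simpa))
      (excess_nonneg p q z)
  have hincr : ∀ y, (f y + dist p y - (f z + dist p z)) - (f y - dist q y - (f z - dist q z))
      = excess p q y := fun y => by
    simp only [excess] at hz ⊢
    rw [dist_comm q y, dist_comm q z]
    linarith
  have hbound : (fun y => excess p q y) =O[𝓝 z] fun y => C * dist y z ^ (1 + α) := by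
    refine IsBigO.of_bound' ?_
    filter_upwards [Metric.ball_mem_nhds z hr₀] with y hy
    rw [Real.norm_of_nonneg (excess_nonneg p q y)]
    exact (hexcess y hy).trans (le_abs_self _)
  refine lipConst_eq_of_isLittleO ?_
  simp only [hincr]
  exact (hbound.trans_isLittleO ((isLittleO_dist_rpow_one_add hα z).const_mul_left C)).mono
    nhdsWithin_le_nhds

/-- If the excess `e_{p,q}` satisfies an Abresch–Gromoll type bound
`e_{p,q}(x) ≤ C d(x,z)^{1+α}` near `z`, then for every locally Lipschitz `f` the local
slopes of `f + d(p,·)` and `f - d(q,·)` agree at `z` (Lemma 6.4 of the paper). -/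
theorem lip_add_dist_eq_lip_sub_dist {X : Type*} [MetricSpace X] (p q z : X)
    (C α r₀ : ℝ) (hC : 0 ≤ C) (hα : 0 < α) (hr₀ : 0 < r₀)
    (hexcess : ∀ x : X, dist x z < r₀ →
      dist p x + dist x q - dist p q ≤ C * dist x z ^ (1 + α))
    (f : X → ℝ) (hf : LocallyLipschitz f) :
    lipConst (fun y => f y + dist p y) z = lipConst (fun y => f y - dist q y) z :=
  lip_add_dist_eq_lip_sub_dist_general p q z C α r₀ hα hr₀ hexcess f
end

section
/- Let (X,d) be a metric space and m a locally finite Borel measure on X giving positive measure to every open ball. Let f : X → ℝ be Lipschitz and g : X → [0,∞] Borel. Fix x ∈ X and suppose there is a Borel map Γ : X × [0,1] → X such that for every z ∈ X: Γ(z,0) = z, Γ(z,1) = x, d(Γ(z,s),Γ(z,t)) = |s−t|·d(z,x) for all s,t ∈ [0,1], and |f(z) − f(x)| ≤ d(z,x)·∫₀¹ g(Γ(z,s)) ds. Suppose moreover that for every s ∈ [0,1) and every Borel set S with m(S) < ∞, the pushforward of m restricted to S under the map z ↦ Γ(z,s) is absolutely continuous with respect to m. Then for every open set U containing x, lip f(x)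 ≤ esssup_U g, the m-essential supremum of g over U. -/
open MeasureTheory Set Filter
open scoped ENNReal NNReal Topology

/-- Lemma 3.1 of the paper: if `g` is an upper gradient of the Lipschitz function `f`
along a measurable selection `Γ` of constant-speed geodesics ending at `x`, whose
interpolation maps are non-degenerate (push finite measures to absolutely continuous
ones), then `lip f (x)` is bounded by the `m`-essential supremum of `g` over any open
neighbourhood `U` of `x`. -/
theorem lipConst_le_essSup {X : Type*} [MetricSpace X] [MeasurableSpace X] [BorelSpace X]
    (m : Measure X) [IsLocallyFiniteMeasure m] [m.IsOpenPosMeasure]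
    (f : X → ℝ) (Kf : ℝ≥0) (hf : LipschitzWith Kf f)
    (g : X → ℝ≥0∞) (hg : Measurable g)
    (x : X) (Γ : X → ℝ → X)
    (hΓmeas : Measurable fun q : X × ℝ => Γ q.1 q.2)
    (hΓ0 : ∀ z, Γ z 0 = z) (hΓ1 : ∀ z, Γ z 1 = x)
    (hΓgeo : ∀ z : X, ∀ s ∈ Icc (0:ℝ) 1, ∀ t ∈ Icc (0:ℝ) 1,
      dist (Γ z s) (Γ z t) = |s - t| * dist z x)
    (hub : ∀ z : X, ENNReal.ofReal |f z - f x| ≤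
      ENNReal.ofReal (dist z x) * ∫⁻ s in Icc (0:ℝ) 1, g (Γ z s))
    (hac : ∀ s ∈ Ico (0:ℝ) 1, ∀ S : Set X, MeasurableSet S → m S < ⊤ →
      Measure.map (fun z => Γ z s) (m.restrict S) ≪ m) :
    ∀ U : Set X, IsOpen U → x ∈ U → lipConst f x ≤ essSup g (m.restrict U) := by
  intro U hU hxU
  set M := essSup g (m.restrict U) with hMdef
  rcases eq_or_ne M ⊤ with hMtop | hMtop
  · rw [hMtop]; exact le_top
  -- choose a small closed ball around x inside U with finite measure
  obtain ⟨V, hV, hVfin⟩ := m.finiteAt_nhds x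
  obtain ⟨r, hr, hrsub⟩ := Metric.nhds_basis_closedBall.mem_iff.1
    (inter_mem (hU.mem_nhds hxU) hV)
  set S := Metric.closedBall x r with hSdef
  have hSU : S ⊆ U := hrsub.trans inter_subset_left
  have hSfin : m S < ⊤ := lt_of_le_of_lt (measure_mono (hrsub.trans inter_subset_right)) hVfin
  set μ := m.restrict S with hμdef
  set ν := (volume : Measure ℝ).restrict (Icc (0:ℝ) 1) with hνdef
  haveI : IsFiniteMeasure μ := ⟨by rw [Measure.restrict_apply_univ]; exact hSfin⟩
  -- the bad set
  set A := U ∩ {w | M < g w} with hAdef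
  have hAmeas : MeasurableSet A := hU.measurableSet.inter (measurableSet_lt measurable_const hg)
  have hA0 : m A = 0 := by
    have h1 : ∀ᵐ w ∂(m.restrict U), g w ≤ M := ae_le_essSup
    rw [ae_iff] at h1
    rw [Measure.restrict_apply' hU.measurableSet] at h1
    have : A = {w | ¬ g w ≤ M} ∩ U := by
      ext w; simp [hAdef, not_le, and_comm]
    rw [this]; exact h1
  -- geodesics starting in S stay in S
  have hstay : ∀ z ∈ S, ∀ s ∈ Icc (0:ℝ) 1, Γ z s ∈ S := by
    intro z hz s hs
    have h := hΓgeo z s hs 1 ⟨zero_le_one, le_refl 1⟩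
    rw [hΓ1] at h
    have h1 : dist (Γ z s) x ≤ dist z x := by
      rw [h]
      have : |s - 1| ≤ 1 := abs_le.2 ⟨by linarith [hs.1], by linarith [hs.2]⟩
      calc |s - 1| * dist z x ≤ 1 * dist z x := by
            exact mul_le_mul_of_nonneg_right this dist_nonneg
        _ = dist z x := one_mul _
    exact Metric.mem_closedBall.2 (h1.trans (Metric.mem_closedBall.1 hz))
  -- for each fixed s ∈ [0,1), the bad z-set is μ-null
  have hkey : ∀ s ∈ Ico (0:ℝ) 1, μ {z | M < g (Γ z s)} = 0 := by
    intro s hs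
    have hmeas_s : Measurable (fun z => Γ z s) :=
      hΓmeas.comp (measurable_id.prodMk measurable_const)
    have hmap : Measure.map (fun z => Γ z s) μ A = 0 :=
      hac s hs S measurableSet_closedBall hSfin hA0
    rw [Measure.map_apply hmeas_s hAmeas] at hmap
    have hsetmeas : MeasurableSet {z | M < g (Γ z s)} :=
      measurableSet_lt measurable_const (hg.comp hmeas_s)
    rw [hμdef, Measure.restrict_apply' measurableSet_closedBall] at hmap ⊢
    refine measure_mono_null ?_ hmap
    rintro z ⟨hz1, hz2⟩
    exact ⟨⟨hSU (hstay z hz2 s ⟨hs.1, hs.2.le⟩), hz1⟩, hz2⟩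
  -- Fubini: product set is null
  set E := {p : X × ℝ | M < g (Γ p.1 p.2)} with hEdef
  have hE : MeasurableSet E := measurableSet_lt measurable_const (hg.comp hΓmeas)
  have hprod : (μ.prod ν) E = 0 := by
    rw [Measure.prod_apply_symm hE]
    have hae : (fun s => μ ((fun z => (z, s)) ⁻¹' E)) =ᵐ[ν] 0 := by
      have h1 : ∀ᵐ s ∂ν, s ∈ Icc (0:ℝ) 1 := ae_restrict_mem measurableSet_Icc
      have h2 : ∀ᵐ s ∂ν, s ≠ 1 := by
        refine ae_restrict_of_ae ?_
        rw [ae_iff]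
        have : {s : ℝ | ¬ s ≠ 1} = {1} := by ext w; simp
        rw [this, Real.volume_singleton]
      filter_upwards [h1, h2] with s hs hs1
      exact hkey s ⟨hs.1, lt_of_le_of_ne hs.2 hs1⟩
    calc ∫⁻ s, μ ((fun z => (z, s)) ⁻¹' E) ∂ν = ∫⁻ _, 0 ∂ν := lintegral_congr_ae hae
      _ = 0 := lintegral_zero
  rw [Measure.measure_prod_null hE] at hprod
  -- hence for μ-a.e. z, the upper-gradient integral is ≤ M
  have h_good : ∀ᵐ z ∂μ, ENNReal.ofReal |f z - f x| ≤ ENNReal.ofReal (dist z x) * M := by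
    filter_upwards [hprod] with z hz
    have hgle : ∀ᵐ s ∂ν, g (Γ z s) ≤ M := by
      rw [ae_iff]
      simpa [hEdef, not_le] using hz
    have hint : ∫⁻ s in Icc (0:ℝ) 1, g (Γ z s) ≤ M := by
      calc ∫⁻ s in Icc (0:ℝ) 1, g (Γ z s) ≤ ∫⁻ _, M ∂ν := lintegral_mono_ae hgle
        _ = M * ν univ := lintegral_const M
        _ = M := by
            rw [hνdef, Measure.restrict_apply_univ, Real.volume_Icc]
            norm_num
    exact (hub z).trans (mul_le_mul_right hint _)
  set c := M.toReal with hcdef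
  have hc0 : 0 ≤ c := ENNReal.toReal_nonneg
  -- pointwise bound on the open ball
  have h_all : ∀ y ∈ Metric.ball x r, |f y - f x| ≤ c * dist y x := by
    intro y hy
    refine le_of_forall_pos_le_add ?_
    intro ε hε
    have hdy : dist y x < r := Metric.mem_ball.1 hy
    set δ := min (r - dist y x) (ε / ((Kf : ℝ) + c + 1)) with hδdef
    have hKc : (0:ℝ) < (Kf : ℝ) + c + 1 := by positivity
    have hδpos : 0 < δ := lt_min (by linarith) (div_pos hε hKc)
    have hball_sub : Metric.ball y δ ⊆ S := by
      intro w hw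
      have hwy : dist w y < δ := Metric.mem_ball.1 hw
      have : dist w x ≤ dist w y + dist y x := dist_triangle w y x
      have hδ1 : δ ≤ r - dist y x := min_le_left _ _
      exact Metric.mem_closedBall.2 (by linarith)
    -- find a good point z near y
    have hz : ∃ z ∈ Metric.ball y δ,
        ENNReal.ofReal |f z - f x| ≤ ENNReal.ofReal (dist z x) * M := by
      by_contra hcon
      push_neg at hcon
      have hsub : Metric.ball y δ ⊆ {z | ¬ (ENNReal.ofReal |f z - f x| ≤ ENNReal.ofReal (dist z x) * M)} := by
        intro z hz2; exact not_le.2 (hcon z hz2)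
      have h0 : μ (Metric.ball y δ) = 0 := by
        have := measure_mono_null hsub (ae_iff.1 h_good)
        exact this
      rw [hμdef, Measure.restrict_apply' measurableSet_closedBall,
        inter_eq_left.2 hball_sub] at h0
      exact (Metric.measure_ball_pos m y hδpos).ne' h0
    obtain ⟨z, hzball, hzP⟩ := hz
    have hzy : dist z y < δ := Metric.mem_ball.1 hzball
    have hzr : |f z - f x| ≤ c * dist z x := by
      rw [← ENNReal.ofReal_toReal hMtop, ← hcdef, ← ENNReal.ofReal_mul dist_nonneg] at hzP
      exact ((ENNReal.ofReal_le_ofReal_iff (mul_nonneg dist_nonneg hc0)).1 hzP).trans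
        (le_of_eq (mul_comm _ _))
    have hfyz : |f y - f z| ≤ (Kf : ℝ) * dist y z := by
      have := hf.dist_le_mul y z
      rwa [Real.dist_eq] at this
    have hzx : dist z x ≤ dist z y + dist y x := dist_triangle z y x
    have hδ2 : δ ≤ ε / ((Kf : ℝ) + c + 1) := min_le_right _ _
    have hKδ : ((Kf : ℝ) + c) * δ ≤ ε := by
      have h1 : ((Kf : ℝ) + c) * δ ≤ ((Kf : ℝ) + c) * (ε / ((Kf : ℝ) + c + 1)) :=
        mul_le_mul_of_nonneg_left hδ2 (by positivity)
      have h2 : ((Kf : ℝ) + c) * (ε / ((Kf : ℝ) + c + 1)) ≤ ε := by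
        rw [mul_div_assoc']
        rw [div_le_iff₀ hKc]
        nlinarith
      linarith
    have hdyz : dist y z < δ := by rwa [dist_comm]
    calc |f y - f x| ≤ |f y - f z| + |f z - f x| := abs_sub_le _ _ _
      _ ≤ (Kf : ℝ) * dist y z + c * dist z x := add_le_add hfyz hzr
      _ ≤ (Kf : ℝ) * δ + c * (δ + dist y x) := by
          have h1 : (Kf : ℝ) * dist y z ≤ (Kf : ℝ) * δ :=
            mul_le_mul_of_nonneg_left hdyz.le (by positivity)
          have h2 : c * dist z x ≤ c * (δ + dist y x) :=
            mul_le_mul_of_nonneg_left (by linarith) hc0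
          linarith
      _ ≤ c * dist y x + ε := by nlinarith
  -- conclude on the limsup
  have hev : ∀ᶠ y in 𝓝[≠] x, ENNReal.ofReal (|f y - f x| / dist y x) ≤ M := by
    filter_upwards [mem_nhdsWithin_of_mem_nhds (Metric.ball_mem_nhds x hr),
      self_mem_nhdsWithin] with y hy hyx
    have hd : 0 < dist y x := dist_pos.2 hyx
    have : |f y - f x| / dist y x ≤ c := (div_le_iff₀ hd).2 (h_all y hy)
    calc ENNReal.ofReal (|f y - f x| / dist y x) ≤ ENNReal.ofReal c :=
          ENNReal.ofReal_le_ofReal this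
      _ = M := ENNReal.ofReal_toReal hMtop
  exact Filter.limsup_le_of_le (h := hev)
end

section
/- Let (X,d) be a metric space, f : X → ℝ a Lipschitz function, L ≥ 0, and c : [0,1] → X an L-Lipschitz curve. Then |f(c(1)) − f(c(0))| ≤ L·∫₀¹ lip f(c(t)) dt, where the integral is interpreted as the upper (outer) Lebesgue integral of the nonnegative function t ↦ lip f(c(t)). -/
open MeasureTheory Set Filter
open scoped ENNReal NNReal Topology

/-- The upper (outer) Lebesgue integral of an arbitrary nonnegative function: the
infimum of the integrals of its measurable majorants. -/
noncomputable def upperLintegral (μ : Measure ℝ) (f : ℝ → ℝ≥0∞) : ℝ≥0∞ :=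
  ⨅ (g : ℝ → ℝ≥0∞) (_ : Measurable g) (_ : ∀ t, f t ≤ g t), ∫⁻ t, g t ∂μ

section LipConst

variable {X : Type*} [MetricSpace X] {f : X → ℝ}

theorem lipConst_le_of_lipschitzWith {K : ℝ≥0} (hf : LipschitzWith K f) (x : X) :
    lipConst f x ≤ K := by
  refine limsup_le_of_le (by isBoundedDefault) ?_
  filter_upwards [self_mem_nhdsWithin] with y hy
  rw [← ENNReal.ofReal_coe_nnreal]
  refine ENNReal.ofReal_le_ofReal ((div_le_iff₀ (dist_pos.2 hy)).2 ?_)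
  simpa [Real.dist_eq] using hf.dist_le_mul y x

theorem eventually_dist_le_of_lipConst_lt {x : X} {r : ℝ≥0} (hr : lipConst f x < r) :
    ∀ᶠ y in 𝓝 x, dist (f y) (f x) ≤ r * dist y x := by
  have hquot := eventually_lt_of_limsup_lt hr (by isBoundedDefault)
  filter_upwards [eventually_nhdsWithin_iff.1 hquot] with y hy
  rcases eq_or_ne y x with rfl | hne
  · simp
  have hd : 0 < dist y x := dist_pos.2 hne
  have := hy hne
  rw [← ENNReal.ofReal_coe_nnreal, ENNReal.ofReal_lt_ofReal_iff_of_nonneg (by positivity),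
    div_lt_iff₀ hd] at this
  rw [Real.dist_eq]
  exact this.le

theorem enorm_deriv_comp_le_mul_lipConst {c : ℝ → X} {K : ℝ≥0} {s : Set ℝ} {t : ℝ}
    (hc : LipschitzOnWith K c s) (hs : s ∈ 𝓝 t) (hfin : lipConst f (c t) ≠ ∞) :
    ‖deriv (fun u => f (c u)) t‖ₑ ≤ K * lipConst f (c t) := by
  refine ENNReal.le_mul_of_forall_lt (Or.inr hfin) (Or.inl ENNReal.coe_ne_top)
    fun a ha b hb => ?_
  obtain ⟨r, hr, hrb⟩ := ENNReal.lt_iff_exists_nnreal_btwn.1 hb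
  have hslope : ∀ᶠ u in 𝓝 t, ‖f (c u) - f (c t)‖ ≤ ((r * K : ℝ≥0) : ℝ) * ‖u - t‖ := by
    filter_upwards [(hc.continuousOn.continuousAt hs).eventually
      (eventually_dist_le_of_lipConst_lt hr), hs] with u hu hus
    calc ‖f (c u) - f (c t)‖ ≤ r * dist (c u) (c t) := hu
      _ ≤ r * (K * dist u t) := by gcongr; exact hc.dist_le_mul u hus t (mem_of_mem_nhds hs)
      _ = ((r * K : ℝ≥0) : ℝ) * ‖u - t‖ := by
        rw [Real.dist_eq, Real.norm_eq_abs, NNReal.coe_mul]; ring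
  calc ‖deriv (fun u => f (c u)) t‖ₑ ≤ ENNReal.ofReal ((r * K : ℝ≥0) : ℝ) := by
        rw [← ofReal_norm]
        exact ENNReal.ofReal_le_ofReal (norm_deriv_le_of_lip' (by positivity) hslope)
    _ = K * r := by rw [ENNReal.ofReal_coe_nnreal, ENNReal.coe_mul, mul_comm]
    _ ≤ a * b := mul_le_mul' ha.le hrb.le

end LipConst

theorem lintegral_le_mul_upperLintegral {μ : Measure ℝ} {h F : ℝ → ℝ≥0∞} {a : ℝ≥0∞}
    (ha : a ≠ ∞) (hle : ∀ᵐ t ∂μ, h t ≤ a * F t) :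
    ∫⁻ t, h t ∂μ ≤ a * upperLintegral μ F := by
  rcases eq_or_ne a 0 with rfl | ha₀
  · exact (lintegral_mono_ae hle).trans (by simp)
  simp only [upperLintegral, ENNReal.mul_iInf_of_ne ha₀ ha]
  refine le_iInf fun G => le_iInf fun hG => le_iInf fun hFG => ?_
  calc ∫⁻ t, h t ∂μ ≤ ∫⁻ t, a * G t ∂μ :=
        lintegral_mono_ae <| hle.mono fun t ht => ht.trans (by gcongr; exact hFG t)
    _ = a * ∫⁻ t, G t ∂μ := lintegral_const_mul a hG

theorem abs_sub_le_lintegral_lipConst_general {X : Type*} [MetricSpace X]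
    (f : X → ℝ) (Kf : ℝ≥0) (hf : LipschitzWith Kf f)
    (L : ℝ) (c : ℝ → X)
    (hc : ∀ s ∈ Icc (0:ℝ) 1, ∀ t ∈ Icc (0:ℝ) 1, dist (c s) (c t) ≤ L * |s - t|) :
    ENNReal.ofReal |f (c 1) - f (c 0)| ≤
      ENNReal.ofReal L *
        upperLintegral (volume.restrict (Icc (0:ℝ) 1)) (fun t => lipConst f (c t)) := by
  have hcL : LipschitzOnWith L.toNNReal c (Icc 0 1) :=
    LipschitzOnWith.of_dist_le_mul fun s hs t ht =>
      (hc s hs t ht).trans (by rw [← Real.dist_eq]; gcongr; exact Real.le_coe_toNNReal L)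
  have hFTC : ∫ t in Icc (0:ℝ) 1, deriv (fun u => f (c u)) t = f (c 1) - f (c 0) := by
    rw [integral_Icc_eq_integral_Ioc, ← intervalIntegral.integral_of_le zero_le_one]
    refine LipschitzOnWith.absolutelyContinuousOnInterval (K := Kf * L.toNNReal) ?_
      |>.integral_deriv_eq_sub
    rw [uIcc_of_le zero_le_one]
    exact hf.comp_lipschitzOnWith hcL
  have hderiv : ∀ᵐ t ∂volume.restrict (Icc (0:ℝ) 1),
      ‖deriv (fun u => f (c u)) t‖ₑ ≤ ENNReal.ofReal L * lipConst f (c t) := by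
    rw [← Measure.restrict_congr_set Ioo_ae_eq_Icc]
    refine ae_restrict_of_forall_mem measurableSet_Ioo fun t ht => ?_
    exact enorm_deriv_comp_le_mul_lipConst hcL (Icc_mem_nhds ht.1 ht.2)
      (ne_top_of_le_ne_top ENNReal.coe_ne_top (lipConst_le_of_lipschitzWith hf (c t)))
  calc ENNReal.ofReal |f (c 1) - f (c 0)|
      = ‖∫ t in Icc (0:ℝ) 1, deriv (fun u => f (c u)) t‖ₑ := by
        rw [hFTC, Real.enorm_eq_ofReal_abs]
    _ ≤ ∫⁻ t in Icc (0:ℝ) 1, ‖deriv (fun u => f (c u)) t‖ₑ :=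
        enorm_integral_le_lintegral_enorm _
    _ ≤ _ := lintegral_le_mul_upperLintegral ENNReal.ofReal_ne_top hderiv

/-- The local Lipschitz constant is an upper gradient: for a Lipschitz `f` and an
`L`-Lipschitz curve `c : [0,1] → X`,
`|f(c 1) - f(c 0)| ≤ L · ∫₀¹ lip f (c t) dt`, the integral being the upper Lebesgue
integral of `t ↦ lip f (c t)`. -/
theorem abs_sub_le_lintegral_lipConst {X : Type*} [MetricSpace X]
    (f : X → ℝ) (Kf : ℝ≥0) (hf : LipschitzWith Kf f)
    (L : ℝ) (hL : 0 ≤ L) (c : ℝ → X)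
    (hc : ∀ s ∈ Icc (0:ℝ) 1, ∀ t ∈ Icc (0:ℝ) 1, dist (c s) (c t) ≤ L * |s - t|) :
    ENNReal.ofReal |f (c 1) - f (c 0)| ≤
      ENNReal.ofReal L *
        upperLintegral (volume.restrict (Icc (0:ℝ) 1)) (fun t => lipConst f (c t)) :=
  abs_sub_le_lintegral_lipConst_general f Kf hf L c hc
end

section
/- Let (X,d) be a geodesic metric space, let p, q ∈ X with p ≠ q, and let ε > 0. Then for x ∈ X the following are equivalent: (i) there exists an ε-geodesic σ from p to q and a parameter s with σ(s) = x; (ii) e_{p,q}(x) ≤ ε²·d(p,q). -/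
open Set

variable {X : Type*} [MetricSpace X]

/-- A constant-speed geodesic parameterized on `[0,1]`. -/
def IsConstSpeedGeodesic (γ : ℝ → X) : Prop :=
  ∀ s ∈ Icc (0:ℝ) 1, ∀ t ∈ Icc (0:ℝ) 1,
    dist (γ s) (γ t) = |s - t| * dist (γ 0) (γ 1)

/-- A geodesic metric space: any two points are the endpoints of some constant-speed
geodesic. -/
def IsGeodesicSpace (X : Type*) [MetricSpace X] : Prop :=
  ∀ x y : X, ∃ γ : ℝ → X, γ 0 = x ∧ γ 1 = y ∧ IsConstSpeedGeodesic γ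

/-- A unit-speed piecewise geodesic `σ : [0,L] → X`: there is a partition
`0 = s₀ < s₁ < ⋯ < s_n = L` such that `σ` restricted to each subinterval is an
isometric embedding. -/
def IsPiecewiseUnitSpeedGeodesic (σ : ℝ → X) (L : ℝ) : Prop :=
  ∃ (n : ℕ) (s : ℕ → ℝ), s 0 = 0 ∧ s n = L ∧ (∀ i < n, s i < s (i + 1)) ∧
    ∀ i < n, ∀ u ∈ Icc (s i) (s (i + 1)), ∀ v ∈ Icc (s i) (s (i + 1)),
      dist (σ u) (σ v) = |u - v|

/-- An `ε`-geodesic from `p` to `q`: a unit-speed piecewise geodesic curve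
`σ : [0,L] → X` from `p` to `q` whose length `L` satisfies `|L - d(p,q)| ≤ ε² d(p,q)`. -/
def IsEpsGeodesic (p q : X) (ε : ℝ) (σ : ℝ → X) (L : ℝ) : Prop :=
  σ 0 = p ∧ σ L = q ∧ IsPiecewiseUnitSpeedGeodesic σ L ∧ |L - dist p q| ≤ ε ^ 2 * dist p q

lemma piecewise_lipschitz {σ : ℝ → X} {L : ℝ}
    (h : IsPiecewiseUnitSpeedGeodesic σ L) :
    ∀ u v : ℝ, 0 ≤ u → u ≤ v → v ≤ L → dist (σ u) (σ v) ≤ v - u := by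
  obtain ⟨n, s, hs0, hsn, hmono, hpiece⟩ := h
  suffices H : ∀ k, k ≤ n → ∀ u v : ℝ, s 0 ≤ u → u ≤ v → v ≤ s k →
      dist (σ u) (σ v) ≤ v - u by
    intro u v hu huv hv
    exact H n le_rfl u v (hs0 ▸ hu) huv (hsn ▸ hv)
  intro k
  induction k with
  | zero =>
    intro _ u v hu huv hv
    have : u = v := le_antisymm huv (hv.trans hu)
    simp [this]
  | succ k ih =>
    intro hk u v hu huv hv
    have hk' : k < n := Nat.lt_of_succ_le hk
    by_cases hv' : v ≤ s k
    · exact ih hk'.le u v hu huv hv'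
    · push_neg at hv'
      by_cases hu' : s k ≤ u
      · rw [hpiece k hk' u ⟨hu', huv.trans hv⟩ v ⟨hv'.le, hv⟩, abs_sub_comm,
          abs_of_nonneg (sub_nonneg.2 huv)]
      · push_neg at hu'
        calc dist (σ u) (σ v) ≤ dist (σ u) (σ (s k)) + dist (σ (s k)) (σ v) :=
              dist_triangle _ _ _
          _ ≤ (s k - u) + (v - s k) := by
              refine add_le_add (ih hk'.le u (s k) hu hu'.le le_rfl) ?_
              rw [hpiece k hk' (s k) ⟨le_rfl, (hmono k hk').le⟩ v ⟨hv'.le, hv⟩,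
                abs_sub_comm, abs_of_nonneg (sub_nonneg.2 hv'.le)]
          _ = v - u := by ring

lemma abs_div_mul {u v D : ℝ} (hD : 0 < D) : |u / D - v / D| * D = |u - v| := by
  rw [div_sub_div_same, abs_div, abs_of_pos hD, div_mul_cancel₀]
  exact hD.ne'

/-- Remark 4.12 of the paper: in a geodesic space, `x` lies on an `ε`-geodesic from `p`
to `q` if and only if `e_{p,q}(x) ≤ ε² d(p,q)`. -/
theorem mem_epsGeodesic_iff_excess_le (hX : IsGeodesicSpace X)
    (p q : X) (hpq : p ≠ q) (ε : ℝ) (hε : 0 < ε) (x : X) :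
    (∃ (σ : ℝ → X) (L : ℝ), IsEpsGeodesic p q ε σ L ∧ ∃ s ∈ Icc (0:ℝ) L, σ s = x) ↔
      dist p x + dist x q - dist p q ≤ ε ^ 2 * dist p q := by
  have hD : 0 < dist p q := dist_pos.2 hpq
  constructor
  · rintro ⟨σ, L, ⟨hσ0, hσL, hpw, hlen⟩, s, ⟨hs0, hsL⟩, hσs⟩
    have h1 : dist (σ 0) (σ s) ≤ s - 0 := piecewise_lipschitz hpw 0 s le_rfl hs0 hsL
    have h2 : dist (σ s) (σ L) ≤ L - s := piecewise_lipschitz hpw s L hs0 hsL le_rfl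
    rw [hσ0, hσs] at h1
    rw [hσs, hσL] at h2
    have h3 : L - dist p q ≤ ε ^ 2 * dist p q := (abs_le.1 hlen).2
    linarith
  · intro hex
    by_cases hxp : x = p
    · -- x = p : take a single unit-speed geodesic from p to q
      obtain ⟨γ, h0, h1, hg⟩ := hX p q
      refine ⟨fun t => γ (t / dist p q), dist p q, ⟨?_, ?_, ?_, ?_⟩, 0, ⟨le_rfl, hD.le⟩, ?_⟩
      · simp [h0]
      · simp [div_self hD.ne', h1]
      · refine ⟨1, fun i => if i = 0 then 0 else dist p q, by simp, by simp, ?_, ?_⟩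
        · intro i hi
          interval_cases i
          simpa using hD
        · intro i hi u hu v hv
          interval_cases i
          simp only [if_pos rfl, if_neg one_ne_zero] at hu hv
          rw [hg (u / dist p q) ⟨div_nonneg hu.1 hD.le, div_le_one_of_le₀ hu.2 hD.le⟩
              (v / dist p q) ⟨div_nonneg hv.1 hD.le, div_le_one_of_le₀ hv.2 hD.le⟩,
            h0, h1, abs_div_mul hD]
      · simpa using mul_nonneg (by positivity) hD.le
      · simp [h0, hxp]
    · by_cases hxq : x = q
      · -- x = q : same curve, witness s = dist p q
        obtain ⟨γ, h0, h1, hg⟩ := hX p q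
        refine ⟨fun t => γ (t / dist p q), dist p q, ⟨?_, ?_, ?_, ?_⟩,
          dist p q, ⟨hD.le, le_rfl⟩, ?_⟩
        · simp [h0]
        · simp [div_self hD.ne', h1]
        · refine ⟨1, fun i => if i = 0 then 0 else dist p q, by simp, by simp, ?_, ?_⟩
          · intro i hi
            interval_cases i
            simpa using hD
          · intro i hi u hu v hv
            interval_cases i
            simp only [if_pos rfl, if_neg one_ne_zero] at hu hv
            rw [hg (u / dist p q) ⟨div_nonneg hu.1 hD.le, div_le_one_of_le₀ hu.2 hD.le⟩
                (v / dist p q) ⟨div_nonneg hv.1 hD.le, div_le_one_of_le₀ hv.2 hD.le⟩,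
              h0, h1, abs_div_mul hD]
        · simpa using mul_nonneg (by positivity) hD.le
        · simp [div_self hD.ne', h1, hxq]
      · -- general case : concatenate geodesics p → x and x → q
        obtain ⟨γ₁, h10, h11, hg1⟩ := hX p x
        obtain ⟨γ₂, h20, h21, hg2⟩ := hX x q
        set D₁ := dist p x with hD₁def
        set D₂ := dist x q with hD₂def
        have hD₁ : 0 < D₁ := dist_pos.2 fun h => hxp h.symm
        have hD₂ : 0 < D₂ := dist_pos.2 hxq
        set σ : ℝ → X := fun t => if t ≤ D₁ then γ₁ (t / D₁) else γ₂ ((t - D₁) / D₂)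
          with hσdef
        have hσ2 : ∀ t, D₁ ≤ t → σ t = γ₂ ((t - D₁) / D₂) := by
          intro t ht
          by_cases h : t ≤ D₁
          · have : t = D₁ := le_antisymm h ht
            simp [hσdef, this, div_self hD₁.ne', h11, h20.symm]
          · simp [hσdef, h]
        refine ⟨σ, D₁ + D₂, ⟨?_, ?_, ?_, ?_⟩, D₁, ⟨hD₁.le, by linarith⟩, ?_⟩
        · simp [hσdef, hD₁.le, h10]
        · rw [hσ2 _ (by linarith)]
          simp [div_self hD₂.ne', h21]
        · refine ⟨2, fun i => if i = 0 then 0 else if i = 1 then D₁ else D₁ + D₂,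
            by simp, by simp, ?_, ?_⟩
          · intro i hi
            interval_cases i
            · norm_num
              exact hD₁
            · norm_num
              linarith
          · intro i hi u hu v hv
            interval_cases i
            · norm_num [Set.mem_Icc] at hu hv
              have hσu : σ u = γ₁ (u / D₁) := by simp [hσdef, hu.2]
              have hσv : σ v = γ₁ (v / D₁) := by simp [hσdef, hv.2]
              rw [hσu, hσv,
                hg1 (u / D₁) ⟨div_nonneg hu.1 hD₁.le, div_le_one_of_le₀ hu.2 hD₁.le⟩
                  (v / D₁) ⟨div_nonneg hv.1 hD₁.le, div_le_one_of_le₀ hv.2 hD₁.le⟩,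
                h10, h11, ← hD₁def, abs_div_mul hD₁]
            · norm_num [Set.mem_Icc] at hu hv
              rw [hσ2 u hu.1, hσ2 v hv.1,
                hg2 ((u - D₁) / D₂)
                  ⟨div_nonneg (by linarith [hu.1]) hD₂.le,
                   div_le_one_of_le₀ (by linarith [hu.2]) hD₂.le⟩
                  ((v - D₁) / D₂)
                  ⟨div_nonneg (by linarith [hv.1]) hD₂.le,
                   div_le_one_of_le₀ (by linarith [hv.2]) hD₂.le⟩,
                h20, h21, ← hD₂def, abs_div_mul hD₂]
              congr 1
              ring
        · have htri : dist p q ≤ D₁ + D₂ := dist_triangle p x q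
          rw [abs_of_nonneg (by linarith)]
          linarith
        · rw [hσdef]
          simp [div_self hD₁.ne', h11]
end

section
/- Let T > 0, r > 0, L ≥ 0, and let h : [0,T] → ℝ be L-Lipschitz; let h' denote its almost-everywhere defined derivative. Define D : [0,T] → ℝ by D(t) := min( r, sup_{0 ≤ τ ≤ t} |h(0) − h(τ)| ). Then for all 0 ≤ t₁ ≤ t₂ ≤ T, D(t₂) − D(t₁) ≤ ∫_{t₁}^{t₂} |h'(s)| ds. -/
/-!
A Lipschitz function is absolutely continuous, so the fundamental theorem of calculus holds for
it with its a.e. derivative; hence `|h τ - h t₁| ≤ ∫_{t₁}^{τ} |h'| ≤ ∫_{t₁}^{t₂} |h'|` for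
`t₁ ≤ τ ≤ t₂`. By the triangle inequality every `|h 0 - h τ|` with `τ ≤ t₂` is then at most the
running supremum up to `t₁` plus `∫_{t₁}^{t₂} |h'|`, and truncating at `r` does not increase a
nonnegative increment.
-/

open MeasureTheory Set Filter
open scoped Interval NNReal

variable {f f' : ℝ → ℝ} {a b : ℝ}

theorem deriv_ae_eq_of_ae_hasDerivAt (hab : a ≤ b)
    (hf' : ∀ᵐ x, x ∈ Ioo a b → HasDerivAt f (f' x) x) :
    deriv f =ᵐ[volume.restrict (Ι a b)] f' := by
  rw [uIoc_of_le hab, ← Measure.restrict_congr_set Ioo_ae_eq_Ioc, EventuallyEq,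
    ae_restrict_iff' measurableSet_Ioo]
  exact hf'.mono fun x hx hmem => (hx hmem).deriv

namespace AbsolutelyContinuousOnInterval

theorem intervalIntegrable_of_ae_hasDerivAt (hf : AbsolutelyContinuousOnInterval f a b)
    (hab : a ≤ b) (hf' : ∀ᵐ x, x ∈ Ioo a b → HasDerivAt f (f' x) x) :
    IntervalIntegrable f' volume a b :=
  hf.intervalIntegrable_deriv.congr_ae (deriv_ae_eq_of_ae_hasDerivAt hab hf')

theorem integral_eq_sub_of_ae_hasDerivAt (hf : AbsolutelyContinuousOnInterval f a b)
    (hab : a ≤ b) (hf' : ∀ᵐ x, x ∈ Ioo a b → HasDerivAt f (f' x) x) :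
    ∫ x in a..b, f' x = f b - f a := by
  rw [← hf.integral_deriv_eq_sub]
  exact (intervalIntegral.integral_congr_ae_restrict (deriv_ae_eq_of_ae_hasDerivAt hab hf')).symm

theorem abs_sub_le_integral_abs_of_ae_hasDerivAt (hf : AbsolutelyContinuousOnInterval f a b)
    (hab : a ≤ b) (hf' : ∀ᵐ x, x ∈ Ioo a b → HasDerivAt f (f' x) x) :
    |f b - f a| ≤ ∫ x in a..b, |f' x| :=
  hf.integral_eq_sub_of_ae_hasDerivAt hab hf' ▸ intervalIntegral.abs_integral_le_integral_abs hab

end AbsolutelyContinuousOnInterval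

namespace LipschitzOnWith

variable {K : ℝ≥0} {c d : ℝ}

theorem intervalIntegrable_of_ae_hasDerivAt (hf : LipschitzOnWith K f (Icc a b))
    (hf' : ∀ᵐ x, x ∈ Ioo a b → HasDerivAt f (f' x) x) (hac : a ≤ c) (hcd : c ≤ d)
    (hdb : d ≤ b) : IntervalIntegrable f' volume c d :=
  (hf.mono (uIcc_subset_Icc ⟨hac, hcd.trans hdb⟩ ⟨hac.trans hcd, hdb⟩))
    |>.absolutelyContinuousOnInterval |>.intervalIntegrable_of_ae_hasDerivAt hcd
      (hf'.mono fun _ hx hmem => hx ⟨hac.trans_lt hmem.1, hmem.2.trans_le hdb⟩)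

theorem abs_sub_le_integral_abs_of_ae_hasDerivAt (hf : LipschitzOnWith K f (Icc a b))
    (hf' : ∀ᵐ x, x ∈ Ioo a b → HasDerivAt f (f' x) x) (hac : a ≤ c) (hcd : c ≤ d)
    (hdb : d ≤ b) : |f d - f c| ≤ ∫ x in c..d, |f' x| :=
  (hf.mono (uIcc_subset_Icc ⟨hac, hcd.trans hdb⟩ ⟨hac.trans hcd, hdb⟩))
    |>.absolutelyContinuousOnInterval |>.abs_sub_le_integral_abs_of_ae_hasDerivAt hcd
      (hf'.mono fun _ hx hmem => hx ⟨hac.trans_lt hmem.1, hmem.2.trans_le hdb⟩)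

end LipschitzOnWith

theorem csSup_image_Icc_le_csSup_image_Icc_add {α : Type*} [LinearOrder α] {g : α → ℝ}
    {a t₁ t₂ : α} {c : ℝ} (hg : BddAbove (g '' Icc a t₂)) (ha : a ≤ t₁) (h12 : t₁ ≤ t₂)
    (hc : ∀ τ ∈ Icc t₁ t₂, g τ ≤ g t₁ + c) :
    sSup (g '' Icc a t₂) ≤ sSup (g '' Icc a t₁) + c := by
  have hg₁ : BddAbove (g '' Icc a t₁) := hg.mono (image_mono (Icc_subset_Icc_right h12))
  have hle_sup {τ : α} (hτ : τ ∈ Icc a t₁) : g τ ≤ sSup (g '' Icc a t₁) :=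
    le_csSup hg₁ (mem_image_of_mem g hτ)
  have hc₀ : 0 ≤ c := by simpa using hc t₁ ⟨le_rfl, h12⟩
  refine csSup_le ((nonempty_Icc.2 (ha.trans h12)).image g) ?_
  rintro _ ⟨τ, hτ, rfl⟩
  rcases le_total τ t₁ with hτ₁ | hτ₁
  · linarith [hle_sup ⟨hτ.1, hτ₁⟩]
  · linarith [hc τ ⟨hτ₁, hτ.2⟩, hle_sup ⟨ha, le_rfl⟩]

theorem distortion_le_integral_deriv_general (T r L : ℝ)
    (h h' : ℝ → ℝ)
    (hlip : ∀ s ∈ Icc (0:ℝ) T, ∀ t ∈ Icc (0:ℝ) T, |h s - h t| ≤ L * |s - t|)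
    (hderiv : ∀ᵐ s ∂(volume : Measure ℝ), s ∈ Ioo (0:ℝ) T →
      HasDerivWithinAt h (h' s) (Icc (0:ℝ) T) s)
    (D : ℝ → ℝ)
    (hD : ∀ t, D t = min r (sSup ((fun τ => |h 0 - h τ|) '' Icc 0 t))) :
    ∀ t₁ t₂ : ℝ, 0 ≤ t₁ → t₁ ≤ t₂ → t₂ ≤ T →
      D t₂ - D t₁ ≤ ∫ s in t₁..t₂, |h' s| := by
  intro t₁ t₂ ht₁ h12 h2T
  have hlip₀ : LipschitzOnWith (Real.toNNReal L) h (Icc 0 T) :=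
    .of_dist_le' fun s hs t ht => by simpa only [Real.dist_eq] using hlip s hs t ht
  have hderiv₀ : ∀ᵐ s, s ∈ Ioo 0 T → HasDerivAt h (h' s) s :=
    hderiv.mono fun s hs hmem => (hs hmem).hasDerivAt (Icc_mem_nhds hmem.1 hmem.2)
  have hint : IntervalIntegrable (fun s => |h' s|) volume t₁ t₂ :=
    (hlip₀.intervalIntegrable_of_ae_hasDerivAt hderiv₀ ht₁ h12 h2T).abs
  have hbdd : BddAbove ((fun τ => |h 0 - h τ|) '' Icc 0 t₂) :=
    isCompact_Icc.bddAbove_image ((continuousOn_const.sub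
      (hlip₀.continuousOn.mono (Icc_subset_Icc_right h2T))).abs)
  have hsup : sSup ((fun τ => |h 0 - h τ|) '' Icc 0 t₂)
      ≤ sSup ((fun τ => |h 0 - h τ|) '' Icc 0 t₁) + ∫ s in t₁..t₂, |h' s| := by
    refine csSup_image_Icc_le_csSup_image_Icc_add hbdd ht₁ h12 fun τ hτ => ?_
    calc |h 0 - h τ| ≤ |h 0 - h t₁| + |h t₁ - h τ| := abs_sub_le _ _ _
      _ ≤ |h 0 - h t₁| + ∫ s in t₁..τ, |h' s| := by
        gcongr
        rw [abs_sub_comm]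
        exact hlip₀.abs_sub_le_integral_abs_of_ae_hasDerivAt hderiv₀ ht₁ hτ.1 (hτ.2.trans h2T)
      _ ≤ |h 0 - h t₁| + ∫ s in t₁..t₂, |h' s| := by
        gcongr
        exact intervalIntegral.integral_mono_interval le_rfl hτ.1 hτ.2
          (.of_forall fun s => abs_nonneg _) hint
  have hI₀ : 0 ≤ ∫ s in t₁..t₂, |h' s| :=
    intervalIntegral.integral_nonneg h12 fun s _ => abs_nonneg _
  rw [hD, hD, sub_le_iff_le_add', ← min_add_add_right]
  exact min_le_min (le_add_of_nonneg_right hI₀) hsup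

/-- The real-variable core of the distortion bound: for an `L`-Lipschitz function
`h : [0,T] → ℝ` with almost-everywhere derivative `h'`, the scalar distance-distortion
`D(t) = min(r, sup_{τ ≤ t} |h 0 - h τ|)` satisfies
`D(t₂) - D(t₁) ≤ ∫_{t₁}^{t₂} |h'|`. -/
theorem distortion_le_integral_deriv (T r L : ℝ) (hT : 0 < T) (hr : 0 < r) (hL : 0 ≤ L)
    (h h' : ℝ → ℝ)
    (hlip : ∀ s ∈ Icc (0:ℝ) T, ∀ t ∈ Icc (0:ℝ) T, |h s - h t| ≤ L * |s - t|)
    (hderiv : ∀ᵐ s ∂(volume : Measure ℝ), s ∈ Ioo (0:ℝ) T →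
      HasDerivWithinAt h (h' s) (Icc (0:ℝ) T) s)
    (D : ℝ → ℝ)
    (hD : ∀ t, D t = min r (sSup ((fun τ => |h 0 - h τ|) '' Icc 0 t))) :
    ∀ t₁ t₂ : ℝ, 0 ≤ t₁ → t₁ ≤ t₂ → t₂ ≤ T →
      D t₂ - D t₁ ≤ ∫ s in t₁..t₂, |h' s| :=
  distortion_le_integral_deriv_general T r L h h' hlip hderiv D hD
end

section
/- Let (X,d) be a metric space, x₀, x₁ ∈ X, r > 0, and ε > 0. Let A be a nonempty subset of the closed ball of radius r about x₁ and T : A → X a map such that: (i) T(a) lies in the closed ball of radius (1+ε)r about x₀ for every a ∈ A; (ii) |d(T(a),T(b)) − d(a,b)| ≤ εr for all a, b ∈ A; (iii) every point of the closed ball of radius r about x₁ is within distance εr of some point of A; (iv) every point of the closed ball of radius (1+ε)r about x₀ is within distance εr of some point of T(A); (v) there exists a* ∈ A with d(a*,x₁) ≤ εr and d(T(a*),x₀) ≤ 2εr. Then there exists a map Φ from the closed ball of radius r about x₁ to the closed ball of radius (1+ε)r about x₀ such that |d(Φ(u),Φ(v)) − d(u,v)| ≤ 3εr for all u, v in the domain,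 every point of the closed ball of radius (1+ε)r about x₀ is within distance 3εr of the image of Φ, and d(Φ(x₁),x₀) ≤ 5εr. -/
open Metric

/-- Gromov–Hausdorff approximation construction: an almost-isometric correspondence `T`
defined on an `εr`-dense subset `A` of the ball `B̄(x₁,r)` extends to a pointed
`3εr`-approximation `Φ` between `B̄(x₁,r)` and `B̄(x₀,(1+ε)r)`. -/
theorem gh_approximation_extension {X : Type*} [MetricSpace X]
    (x₀ x₁ : X) (r ε : ℝ) (hr : 0 < r) (hε : 0 < ε)
    (A : Set X) (hA : A.Nonempty) (hAsub : A ⊆ closedBall x₁ r)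
    (T : X → X)
    (h1 : ∀ a ∈ A, T a ∈ closedBall x₀ ((1 + ε) * r))
    (h2 : ∀ a ∈ A, ∀ b ∈ A, |dist (T a) (T b) - dist a b| ≤ ε * r)
    (h3 : ∀ u ∈ closedBall x₁ r, ∃ a ∈ A, dist u a ≤ ε * r)
    (h4 : ∀ w ∈ closedBall x₀ ((1 + ε) * r), ∃ a ∈ A, dist w (T a) ≤ ε * r)
    (h5 : ∃ a ∈ A, dist a x₁ ≤ ε * r ∧ dist (T a) x₀ ≤ 2 * ε * r) :
    ∃ Φ : X → X,
      (∀ u ∈ closedBall x₁ r, Φ u ∈ closedBall x₀ ((1 + ε) * r)) ∧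
      (∀ u ∈ closedBall x₁ r, ∀ v ∈ closedBall x₁ r,
        |dist (Φ u) (Φ v) - dist u v| ≤ 3 * ε * r) ∧
      (∀ w ∈ closedBall x₀ ((1 + ε) * r),
        ∃ u ∈ closedBall x₁ r, dist w (Φ u) ≤ 3 * ε * r) ∧
      dist (Φ x₁) x₀ ≤ 5 * ε * r := by
  classical
  obtain ⟨a, haA, ha1, ha0⟩ := h5
  set f : X → X := fun u =>
    if u = x₁ then a
    else if h : u ∈ closedBall x₁ r then (h3 u h).choose else a with hf
  have hfA : ∀ u ∈ closedBall x₁ r, f u ∈ A := by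
    intro u hu
    by_cases h : u = x₁
    · simp [hf, h, haA]
    · simp only [hf, h, if_false, hu, dif_pos]
      exact (h3 u hu).choose_spec.1
  have hfd : ∀ u ∈ closedBall x₁ r, dist u (f u) ≤ ε * r := by
    intro u hu
    by_cases h : u = x₁
    · simpa [hf, h, dist_comm] using ha1
    · simp only [hf, h, if_false, hu, dif_pos]
      exact (h3 u hu).choose_spec.2
  refine ⟨fun u => T (f u), ?_, ?_, ?_, ?_⟩
  · intro u hu; exact h1 _ (hfA u hu)
  · intro u hu v hv
    have h2' := h2 _ (hfA u hu) _ (hfA v hv)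
    have hdu := hfd u hu
    have hdv := hfd v hv
    have : |dist (f u) (f v) - dist u v| ≤ 2 * (ε * r) := by
      have := abs_dist_sub_le (f u) (f v) u
      have h1' : |dist (f u) (f v) - dist u (f v)| ≤ dist (f u) u :=
        abs_dist_sub_le _ _ _
      have h2'' : |dist u (f v) - dist u v| ≤ dist (f v) v := by
        have := abs_dist_sub_le (f v) v u
        simpa [dist_comm] using this
      calc |dist (f u) (f v) - dist u v|
          ≤ |dist (f u) (f v) - dist u (f v)| + |dist u (f v) - dist u v| := by
            have := abs_sub_abs_le_abs_sub (dist (f u) (f v)) (dist u v)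
            exact abs_sub_le _ _ _
        _ ≤ dist (f u) u + dist (f v) v := add_le_add h1' h2''
        _ ≤ ε * r + ε * r := add_le_add (by simpa [dist_comm] using hdu)
            (by simpa [dist_comm] using hdv)
        _ = 2 * (ε * r) := by ring
    calc |dist (T (f u)) (T (f v)) - dist u v|
        ≤ |dist (T (f u)) (T (f v)) - dist (f u) (f v)| +
            |dist (f u) (f v) - dist u v| := abs_sub_le _ _ _
      _ ≤ ε * r + 2 * (ε * r) := add_le_add h2' this
      _ = 3 * ε * r := by ring
  · intro w hw
    obtain ⟨b, hbA, hbd⟩ := h4 w hw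
    have hb := hAsub hbA
    refine ⟨b, hb, ?_⟩
    have hd1 : dist (T b) (T (f b)) ≤ dist b (f b) + ε * r := by
      have := h2 _ hbA _ (hfA b hb)
      rw [abs_le] at this
      linarith [this.2]
    calc dist w (T (f b)) ≤ dist w (T b) + dist (T b) (T (f b)) := dist_triangle _ _ _
      _ ≤ ε * r + (dist b (f b) + ε * r) := add_le_add hbd hd1
      _ ≤ ε * r + (ε * r + ε * r) := by linarith [hfd b hb]
      _ = 3 * ε * r := by ring
  · have : f x₁ = a := by simp [hf]
    simp only []
    show dist (T (f x₁)) x₀ ≤ 5 * ε * r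
    rw [this]
    have : (0:ℝ) ≤ ε * r := le_of_lt (mul_pos hε hr)
    linarith
end
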